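/- For every pyramidal sequence of vectors p = (Δ_1, ..., Δ_{n-1}) (with Δ_1 = (1,...,1) of length n-1 and each transition being either the merging of two adjacent entries or deletion of the leftmost or rightmost entry), there exists a permutation u ∈ S_n such that the pyramidal sequence of consecutive differences of s = u^{-1} equals p, i.e., Δ_i(s) = Δ_i for all i ∈ [n-1]. -/

import Mathlib

/-- Vector of consecutive differences of a list. -/
def diffs (l : List ℕ) : List ℕ := List.zipWith (fun a b => b - a) l l.tail

/-- Δ(X): consecutive differences of the increasing enumeration of a finite set. -/
def setDiffs (X : Finset ℕ) : List ℕ := diffs (X.sort (· ≤ ·))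

/-- c̄(Δ) = {c, c+d₁, c+d₁+d₂, ...}. -/
def barSet (c : ℕ) (ds : List ℕ) : Finset ℕ :=
  ((List.range (ds.length + 1)).map (fun j => c + (ds.take j).sum)).toFinset

/-- A finite set (of cardinality ≥ 2) is periodic if its consecutive differences are constant. -/
def PeriodicSet (X : Finset ℕ) : Prop :=
  2 ≤ X.card ∧ ∃ d, 0 < d ∧ setDiffs X = List.replicate (X.card - 1) d

/-- A vector is periodic if all its entries are equal to some positive d. -/
def PerVec (v : List ℕ) : Prop := ∃ d, 0 < d ∧ v = List.replicate v.length d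

/-- Membership in D_{|u|,n}: injective word over [n], complement periodic,
no proper nonempty prefix has a periodic complement. -/
def MemD (n : ℕ) (u : List ℕ) : Prop :=
  u.Nodup ∧ (∀ x ∈ u, x ∈ Finset.Icc 1 n) ∧
  PeriodicSet (Finset.Icc 1 n \ u.toFinset) ∧
  ∀ j, 1 ≤ j → j < u.length → ¬ PeriodicSet (Finset.Icc 1 n \ (u.take j).toFinset)

/-- A list is a permutation word of [n]. -/
def IsPermList (n : ℕ) (s : List ℕ) : Prop :=
  s.length = n ∧ s.Nodup ∧ s.toFinset = Finset.Icc 1 n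

/-- s is the inverse permutation word of u (both permutations of [n]). -/
def InvPerm (n : ℕ) (u s : List ℕ) : Prop :=
  IsPermList n u ∧ IsPermList n s ∧
  ∀ j k, j < n → k < n → (u.getD j 0 = k + 1 ↔ s.getD k 0 = j + 1)

/-- Δ_i(s): consecutive differences of {s_i, ..., s_n} (1-indexed). -/
def deltaVec (s : List ℕ) (i : ℕ) : List ℕ := setDiffs (s.drop (i - 1)).toFinset

/-- One transition of a pyramidal sequence: merge two adjacent entries,
or delete the leftmost, or delete the rightmost entry. -/
def PyrStep (v w : List ℕ) : Prop :=
  (∃ l a b r, v = l ++ a :: b :: r ∧ w = l ++ (a + b) :: r) ∨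
  (∃ a r, v = a :: r ∧ w = r) ∨
  (∃ l a, v = l ++ [a] ∧ w = l)

/-- A pyramidal sequence of vectors of size n, encoded as a list [Δ₁, ..., Δ_{n-1}]. -/
def IsPyramidal (n : ℕ) (P : List (List ℕ)) : Prop :=
  P.length = n - 1 ∧ P.getD 0 [] = List.replicate (n - 1) 1 ∧
  ∀ i, i + 1 < n - 1 → PyrStep (P.getD i []) (P.getD (i + 1) [])

/-- A trapezoidal sequence of height i of size n, encoded as [Δ₁, ..., Δ_{i+1}]:
Δ_{i+1} periodic, Δ_j not periodic for 2 ≤ j ≤ i. -/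
def IsTrapezoidal (n i : ℕ) (T : List (List ℕ)) : Prop :=
  T.length = i + 1 ∧ T.getD 0 [] = List.replicate (n - 1) 1 ∧
  (∀ j, j < i → PyrStep (T.getD j []) (T.getD (j + 1) [])) ∧
  PerVec (T.getD i []) ∧
  ∀ j, 1 ≤ j → j < i → ¬ PerVec (T.getD j [])

/-- Non-interval permutation of [m]: no prefix of length l, 2 ≤ l < m, has as
letter set an interval of consecutive integers. -/
def IsNonIntervalPerm (m : ℕ) (s : List ℕ) : Prop :=
  IsPermList m s ∧ ∀ l, 2 ≤ l → l < m → ¬ ∃ a, (s.take l).toFinset = Finset.Icc a (a + l - 1)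

/-- v is obtained from u by a rigid shift of height h by k places to the left:
columns of height < h are untouched and receive nothing; each position of height ≥ h
receives the excess (over h) of the column k places to its right; every block strictly
above the cut lands on a column of height ≥ h. -/
def RigidShiftL (n h k : ℕ) (u v : List ℕ) : Prop :=
  IsPermList n u ∧ IsPermList n v ∧
  (∀ j, j < n → u.getD j 0 < h → v.getD j 0 = u.getD j 0) ∧
  (∀ j, j < n → h ≤ u.getD j 0 → v.getD j 0 = h + (u.getD (j + k) 0 - h)) ∧
  (∀ j, j < n → h < u.getD j 0 → k ≤ j ∧ h ≤ u.getD (j - k) 0)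

/-- Strong shift equivalence: finite sequences of rigid shifts (in either direction). -/
def StrongShiftEq (n : ℕ) (u v : List ℕ) : Prop :=
  Relation.ReflTransGen (fun a b => ∃ h k, RigidShiftL n h k a b ∨ RigidShiftL n h k b a) u v

/-- Shift equivalence: finite sequences of rigid shifts and reversals. -/
def ShiftEq (n : ℕ) (u v : List ℕ) : Prop :=
  Relation.ReflTransGen
    (fun a b => (∃ h k, RigidShiftL n h k a b ∨ RigidShiftL n h k b a) ∨ b = a.reverse) u v

/-- Super-strong Wilf equivalence of permutation words of [n], characterized by
equality of all Δ_i of the inverses. -/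
def SSWilf (n : ℕ) (u v : List ℕ) : Prop :=
  ∃ s t, InvPerm n u s ∧ InvPerm n v t ∧ ∀ i, 1 ≤ i → i ≤ n - 1 → deltaVec s i = deltaVec t i

/-!
Read `Δ_i` as the gaps of the sorted list of values that are still present. Merging two
adjacent gaps deletes an interior value, and deleting the first or last gap deletes the
minimum or maximum. So, starting from `1, …, n`, every step of the pyramid deletes one value,
and `s` lists the values in the order in which they are deleted; `u` is then `s⁻¹`.
-/

lemma diffs_cons_cons (a b : ℕ) (l : List ℕ) :
    diffs (a :: b :: l) = (b - a) :: diffs (b :: l) :=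
  rfl

lemma length_diffs (l : List ℕ) : (diffs l).length = l.length - 1 := by
  simp [diffs]

lemma diffs_tail : ∀ l : List ℕ, diffs l.tail = (diffs l).tail
  | [] | [_] | _ :: _ :: _ => rfl

lemma diffs_dropLast : ∀ l : List ℕ, diffs l.dropLast = (diffs l).dropLast
  | [] | [_] | [_, _] => rfl
  | a :: b :: c :: l => by
    have ih := diffs_dropLast (b :: c :: l)
    rw [List.dropLast_cons_cons] at ih
    rw [List.dropLast_cons_cons, List.dropLast_cons_cons, diffs_cons_cons, ih]
    rfl

lemma diffs_range' : ∀ a n : ℕ, diffs (List.range' a n) = List.replicate (n - 1) 1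
  | _, 0 | _, 1 => rfl
  | a, n + 2 => by
    rw [List.range'_succ, List.range'_succ, diffs_cons_cons, ← List.range'_succ,
      diffs_range' (a + 1) (n + 1)]
    simp [List.replicate_succ]

lemma setDiffs_toFinset {l : List ℕ} (hl : l.Pairwise (· < ·)) :
    setDiffs l.toFinset = diffs l := by
  rw [setDiffs, (List.toFinset_sort _ hl.nodup).mpr (hl.imp le_of_lt)]

-- `L[l.length + 1]` is the entry between the gaps `a` and `b`.
lemma diffs_eraseIdx_of_diffs_eq_append (l : List ℕ) {L : List ℕ} (hL : L.Pairwise (· ≤ ·))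
    {a b : ℕ} {r : List ℕ} (h : diffs L = l ++ a :: b :: r) :
    diffs (L.eraseIdx (l.length + 1)) = l ++ (a + b) :: r := by
  induction l generalizing L with
  | nil =>
    match L, hL, h with
    | p :: q :: t :: L, hL, h =>
      simp only [diffs_cons_cons, List.nil_append, List.cons.injEq] at h
      obtain ⟨rfl, rfl, rfl⟩ := h
      have hpq : p ≤ q := List.rel_of_pairwise_cons hL (by simp)
      have hqt : q ≤ t := List.rel_of_pairwise_cons hL.of_cons (by simp)
      simp only [List.length_nil, List.eraseIdx_cons_succ, List.eraseIdx_cons_zero,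
        diffs_cons_cons, List.nil_append]
      congr 1
      omega
  | cons d l ih =>
    match L, hL, h with
    | p :: q :: L, hL, h =>
      rw [diffs_cons_cons, List.cons_append, List.cons.injEq] at h
      have := ih hL.of_cons h.2
      simp only [List.length_cons, List.eraseIdx_cons_succ] at this ⊢
      rw [diffs_cons_cons, this, h.1, List.cons_append]

lemma PyrStep.exists_diffs_eraseIdx {L w : List ℕ} (hL : L.Pairwise (· ≤ ·))
    (h : PyrStep (diffs L) w) : ∃ i < L.length, diffs (L.eraseIdx i) = w := by
  have hlen := length_diffs L
  rcases h with ⟨l, a, b, r, hv, rfl⟩ | ⟨a, r, hv, rfl⟩ | ⟨l, a, hv, rfl⟩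
  · have := congrArg List.length hv
    simp only [List.length_append, List.length_cons] at this
    exact ⟨l.length + 1, by omega, diffs_eraseIdx_of_diffs_eq_append l hL hv⟩
  · have := congrArg List.length hv
    simp only [List.length_cons] at this
    exact ⟨0, by omega, by rw [List.eraseIdx_zero, diffs_tail, hv, List.tail_cons]⟩
  · have := congrArg List.length hv
    simp only [List.length_append, List.length_cons] at this
    refine ⟨L.length - 1, by omega, ?_⟩
    rw [List.eraseIdx_length_sub_one, diffs_dropLast, hv, List.dropLast_concat]

lemma exists_perm_setDiffs_drop {Q : List (List ℕ)} (hQ : Q.IsChain PyrStep) {L : List ℕ}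
    (hL : L.Pairwise (· < ·)) (hd : diffs L = Q.getD 0 []) :
    ∃ s : List ℕ, s.Perm L ∧
      ∀ i < Q.length, setDiffs (s.drop i).toFinset = Q.getD i [] := by
  induction Q generalizing L with
  | nil => exact ⟨L, .refl L, by simp⟩
  | cons v Q ih =>
    suffices ∃ s : List ℕ, s.Perm L ∧
        ∀ i < Q.length, setDiffs (s.drop (i + 1)).toFinset = Q.getD i [] by
      obtain ⟨s, hs, hsQ⟩ := this
      refine ⟨s, hs, ?_⟩
      rintro (_ | i) hi
      · rw [List.drop_zero, List.toFinset_eq_of_perm _ _ hs, setDiffs_toFinset hL, hd]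
      · exact hsQ i (by simpa using hi)
    cases Q with
    | nil => exact ⟨L, .refl L, by simp⟩
    | cons w Q =>
      obtain ⟨hvw, hQ⟩ := List.isChain_cons_cons.mp hQ
      obtain ⟨k, hk, hw⟩ := PyrStep.exists_diffs_eraseIdx (hL.imp le_of_lt)
        ((show diffs L = v from hd) ▸ hvw)
      obtain ⟨s, hs, hsQ⟩ := ih hQ (hL.sublist (List.eraseIdx_sublist L k)) hw
      exact ⟨L[k] :: s, (hs.cons _).trans (List.getElem_cons_eraseIdx_perm hk), hsQ⟩

lemma IsPyramidal.isChain {n : ℕ} {P : List (List ℕ)} (hP : IsPyramidal n P) :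
    P.IsChain PyrStep := by
  refine List.isChain_iff_getElem.mpr fun i hi => ?_
  have hlen := hP.1
  simpa only [List.getD_eq_getElem _ _ hi, List.getD_eq_getElem _ _ (Nat.lt_of_succ_lt hi)]
    using hP.2.2 i (by omega)

lemma isPermList_of_perm_range' {n : ℕ} {s : List ℕ} (h : s.Perm (List.range' 1 n)) :
    IsPermList n s :=
  ⟨by simp [h.length_eq], h.nodup_iff.mpr List.nodup_range',
    by rw [List.toFinset_eq_of_perm _ _ h, List.toFinset_range'_1_1]⟩

lemma IsPermList.exists_invPerm {n : ℕ} {s : List ℕ} (hs : IsPermList n s) :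
    ∃ u, InvPerm n u s := by
  obtain ⟨hlen, hnd, hfin⟩ := hs
  have hmem : ∀ j < n, j + 1 ∈ s := fun j hj => by
    rw [← List.mem_toFinset, hfin, Finset.mem_Icc]; omega
  have hidx : ∀ j < n, s.idxOf (j + 1) < n := fun j hj =>
    hlen ▸ List.idxOf_lt_length_iff.mpr (hmem j hj)
  set u := (List.range n).map fun j => s.idxOf (j + 1) + 1
  have hu : ∀ j < n, u.getD j 0 = s.idxOf (j + 1) + 1 := fun j hj => by
    simp [u, List.getD_eq_getElem?_getD, hj]
  have hund : u.Nodup := by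
    refine List.nodup_range.map_on fun a ha b hb hab => ?_
    simp only [List.mem_range, Nat.add_right_cancel_iff] at ha hb hab
    have := (List.idxOf_inj (hmem a ha)).mp hab
    omega
  refine ⟨u, ⟨by simp [u], hund, ?_⟩, ⟨hlen, hnd, hfin⟩, fun j k hj hk => ?_⟩
  · refine Finset.eq_of_subset_of_card_le (fun y hy => ?_)
      (by simp [List.toFinset_card_of_nodup hund, u])
    simp only [u, List.mem_toFinset, List.mem_map, List.mem_range] at hy
    obtain ⟨j, hj, rfl⟩ := hy
    have := hidx j hj
    simp only [Finset.mem_Icc]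
    omega
  · have hk' : k < s.length := hlen ▸ hk
    rw [hu j hj, List.getD_eq_getElem _ _ hk', Nat.add_right_cancel_iff]
    constructor
    · rintro rfl
      exact List.getElem_idxOf hk'
    · intro h
      rw [← h, hnd.idxOf_getElem]

theorem stmt13_general (n : ℕ) (P : List (List ℕ)) (hP : IsPyramidal n P) :
    ∃ u s, InvPerm n u s ∧ ∀ i, 1 ≤ i → i ≤ n - 1 → deltaVec s i = P.getD (i - 1) [] := by
  obtain ⟨s, hs, hsP⟩ := exists_perm_setDiffs_drop hP.isChain (L := List.range' 1 n)
    List.pairwise_lt_range' (by rw [diffs_range', hP.2.1])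
  obtain ⟨u, hu⟩ := (isPermList_of_perm_range' hs).exists_invPerm
  exact ⟨u, s, hu, fun i hi₁ hi₂ => hsP (i - 1) (by rw [hP.1]; omega)⟩

theorem stmt13 (n : ℕ) (hn : 1 ≤ n) (P : List (List ℕ)) (hP : IsPyramidal n P) :
    ∃ u s, InvPerm n u s ∧ ∀ i, 1 ≤ i → i ≤ n - 1 → deltaVec s i = P.getD (i - 1) [] :=
  stmt13_general n P hP
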